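/- arXiv:2407.18560 — 4 statements merged into one kernel-verified Lean document; each statement's English description precedes it below -/
import Mathlib

section
/- For every K > 2 and every K-AND-OR-BN F on n nodes, if F is observable with an observation set of size m, then (m : ℝ) ≥ ((1 − K) + ((2^K − 1)/2^K) * Real.logb 2 (2^K − 1)) * n. -/
/-- `F` is observable with observation set `S` if the map from an initial state to its
output sequence (the restriction of each iterate to `S`) is injective. -/
def observable {n : ℕ} (F : (Fin n → Bool) → (Fin n → Bool)) (S : Finset (Fin n)) : Prop :=
  Function.Injective (fun (x : Fin n → Bool) => fun (t : ℕ) (i : S) => (F^[t] x) i.val)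

/-- `F` is a `K`-AND-OR-BN: each local function is the AND or the OR of `K` literals
on pairwise distinct variables (a literal is `x_{i_j} XOR b_j`). -/
def isAndOrBN {n : ℕ} (K : ℕ) (F : (Fin n → Bool) → (Fin n → Bool)) : Prop :=
  ∀ i : Fin n, ∃ idx : Fin K → Fin n, Function.Injective idx ∧ ∃ b : Fin K → Bool,
    (∀ x, F x i = Finset.univ.inf (fun j => Bool.xor (x (idx j)) (b j))) ∨
    (∀ x, F x i = Finset.univ.sup (fun j => Bool.xor (x (idx j)) (b j)))

/-!
Observability makes `x ↦ (x|_S, F x)` injective: the output at time `0` is `x|_S`, and every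
later output is determined by `F x`. So the uniform distribution on the `2 ^ n` states, of
entropy `n log 2`, is carried injectively to `m + n` Boolean coordinates, and by subadditivity
of entropy `n log 2` is at most the sum of their entropies. An observed coordinate contributes at
most `log 2`; a coordinate `F_i`, an AND or OR of `K` literals on distinct variables, is true on a
fraction `2⁻ᴷ` or `1 - 2⁻ᴷ` of the states, so it contributes
`h(2⁻ᴷ) = K log 2 - (1 - 2⁻ᴷ) log (2ᴷ - 1)`.
-/

open Real Finset

lemma sum_log_card_mul_le_zero {α : Type*} [Fintype α] (w : α → ℝ) (hw : ∀ a, 0 < w a)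
    (hsum : ∑ a, w a ≤ 1) : ∑ a, log (Fintype.card α * w a) ≤ 0 := by
  calc ∑ a, log (Fintype.card α * w a) ≤ ∑ a, (Fintype.card α * w a - 1) :=
        sum_le_sum fun a _ => log_le_sub_one_of_pos <|
          mul_pos (Nat.cast_pos.mpr (Fintype.card_pos_iff.mpr ⟨a⟩)) (hw a)
    _ = Fintype.card α * (∑ a, w a - 1) := by
        rw [sum_sub_distrib, ← mul_sum]; simp [mul_sub]
    _ ≤ 0 := mul_nonpos_of_nonneg_of_nonpos (Nat.cast_nonneg _) (by linarith)

/-- Subadditivity of Shannon entropy, for the uniform distribution on the range of `f`; the proof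
is Gibbs' inequality against the product `∏ i, r i (y i)` of the coordinate marginals. -/
lemma log_card_le_sum_negMulLog {α ι β : Type*} [Fintype α] [Fintype ι] [DecidableEq ι]
    [Fintype β] [DecidableEq β] {f : α → ι → β} (hf : Function.Injective f) :
    log (Fintype.card α) ≤
      ∑ i, ∑ b, negMulLog (#{a | f a i = b} / Fintype.card α) := by
  rcases isEmpty_or_nonempty α with hα | hα
  · simp
  have hN : (0 : ℝ) < Fintype.card α := by exact_mod_cast Fintype.card_pos
  set N : ℝ := (Fintype.card α : ℝ)
  set r : ι → β → ℝ := fun i b => #{a | f a i = b} / N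
  have hr_pos (a : α) (i : ι) : 0 < r i (f a i) :=
    div_pos (by exact_mod_cast card_pos.mpr ⟨a, by simp⟩) hN
  have hr_sum (i : ι) : ∑ b, r i b = 1 := by
    rw [← sum_div, div_eq_one_iff_eq hN.ne', ← Nat.cast_sum,
      ← card_eq_sum_card_fiberwise fun a _ => mem_univ (f a i), card_univ]
  have hw_sum : ∑ a, ∏ i, r i (f a i) ≤ 1 := calc
    ∑ a, ∏ i, r i (f a i) = ∑ y ∈ univ.image f, ∏ i, r i (y i) :=
      (sum_image (f := fun y : ι → β => ∏ i, r i (y i)) hf.injOn).symm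
    _ ≤ ∑ y : ι → β, ∏ i, r i (y i) :=
      sum_le_univ_sum_of_nonneg fun y => prod_nonneg fun i _ => by positivity
    _ = 1 := by rw [← Fintype.prod_sum, prod_eq_one fun i _ => hr_sum i]
  have hfiber (i : ι) : ∑ a, log (r i (f a i)) = -(N * ∑ b, negMulLog (r i b)) := by
    rw [← sum_fiberwise univ (fun a => f a i), mul_sum, ← sum_neg_distrib]
    refine sum_congr rfl fun b _ => ?_
    rw [sum_congr rfl fun a ha => by rw [(mem_filter.mp ha).2], sum_const, nsmul_eq_mul,
      negMulLog, show (#{a | f a i = b} : ℝ) = N * r i b by simp only [r]; field_simp]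
    ring
  have hsplit :
      ∑ a, log (N * ∏ i, r i (f a i)) = N * log N - N * ∑ i, ∑ b, negMulLog (r i b) :=
    calc ∑ a, log (N * ∏ i, r i (f a i)) = ∑ a, (log N + ∑ i, log (r i (f a i))) :=
          sum_congr rfl fun a _ => by
            rw [log_mul hN.ne' (prod_pos fun i _ => hr_pos a i).ne',
              log_prod fun i _ => (hr_pos a i).ne']
      _ = N * log N + ∑ i, ∑ a, log (r i (f a i)) := by
          rw [sum_add_distrib, sum_const, card_univ, nsmul_eq_mul, sum_comm]
      _ = N * log N - N * ∑ i, ∑ b, negMulLog (r i b) := by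
          simp only [hfiber, sum_neg_distrib, ← mul_sum]; ring
  have key : ∑ a, log (N * ∏ i, r i (f a i)) ≤ 0 :=
    sum_log_card_mul_le_zero _ (fun a => prod_pos fun i _ => hr_pos a i) hw_sum
  rw [hsplit, sub_nonpos] at key
  exact le_of_mul_le_mul_left key hN

section
variable {α : Type*} [Fintype α]

lemma card_filter_not_div [Nonempty α] (p : α → Prop) [DecidablePred p] :
    (#{a | ¬ p a} / Fintype.card α : ℝ) = 1 - #{a | p a} / Fintype.card α := by
  have hN : (Fintype.card α : ℝ) ≠ 0 := by exact_mod_cast Fintype.card_ne_zero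
  rw [eq_sub_iff_add_eq, ← add_div, div_eq_one_iff_eq hN, ← Nat.cast_add, add_comm,
    card_filter_add_card_filter_not, card_univ]

lemma sum_negMulLog_card_fiber_eq_binEntropy (p : α → Bool) :
    ∑ b, negMulLog (#{a | p a = b} / Fintype.card α) =
      binEntropy (#{a | p a = true} / Fintype.card α) := by
  rcases isEmpty_or_nonempty α with hα | hα
  · simp
  rw [binEntropy_eq_negMulLog_add_negMulLog_one_sub, Fintype.sum_bool, ← card_filter_not_div]
  simp
end

lemma Function.Injective.card_filter_forall_apply_eq_mul {ι κ β : Type*} [Fintype ι]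
    [DecidableEq ι] [Fintype κ] [Fintype β] {idx : κ → ι} (hidx : Function.Injective idx)
    (v : κ → β) [DecidablePred fun x : ι → β => ∀ j, x (idx j) = v j] :
    #{x : ι → β | ∀ j, x (idx j) = v j} * Fintype.card β ^ Fintype.card κ =
      Fintype.card β ^ Fintype.card ι := by
  rw [← Fintype.card_subtype, Fintype.card_eq_nat_card]
  classical
  let e : (ι → β) ≃ (κ → β) × ({i // i ∉ Set.range idx} → β) :=
    (Equiv.piEquivPiSubtypeProd (· ∈ Set.range idx) fun _ => β).trans
      ((Equiv.ofInjective idx hidx).symm.arrowCongr (Equiv.refl β) |>.prodCongr (Equiv.refl _))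
  have he (x : ι → β) (j : κ) : (e x).1 j = x (idx j) := by
    simp [e, Equiv.arrowCongr]
  calc Nat.card {x : ι → β // ∀ j, x (idx j) = v j} * Fintype.card β ^ Fintype.card κ
      = Nat.card ({i // i ∉ Set.range idx} → β) * Nat.card (κ → β) := by
        rw [Nat.card_congr (e.subtypeEquiv (q := fun y => y.1 = v) fun x => by
            simp [funext_iff, he]),
          Nat.card_congr (Equiv.prodSubtypeFstEquivSubtypeProd (p := (· = v))), Nat.card_prod,
          Nat.card_unique, one_mul, Nat.card_fun (α := κ), Nat.card_eq_fintype_card (α := κ),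
          Nat.card_eq_fintype_card (α := β)]
    _ = Fintype.card β ^ Fintype.card ι := by
        rw [mul_comm, ← Nat.card_prod, ← Nat.card_congr e, Nat.card_fun,
          Nat.card_eq_fintype_card, Nat.card_eq_fintype_card]

lemma binEntropy_inv_two_pow (K : ℕ) :
    binEntropy ((2 : ℝ) ^ K)⁻¹ = K * log 2 - (2 ^ K - 1) / 2 ^ K * log (2 ^ K - 1) := by
  rcases K.eq_zero_or_pos with rfl | hK
  · simp
  have hpow : (2 : ℝ) ^ K ≠ 0 := by positivity
  have hpow_sub_one : (2 : ℝ) ^ K - 1 ≠ 0 := (sub_pos.mpr (one_lt_pow₀ one_lt_two hK.ne')).ne'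
  have hcompl : 1 - ((2 : ℝ) ^ K)⁻¹ = (2 ^ K - 1) / 2 ^ K := by field_simp
  rw [binEntropy, hcompl, inv_inv, inv_div, log_div hpow hpow_sub_one, log_pow]
  field_simp
  ring

lemma log_card_le_sum_binEntropy {α ι : Type*} [Fintype α] [Fintype ι] [DecidableEq ι]
    {f : α → ι → Bool} (hf : Function.Injective f) :
    log (Fintype.card α) ≤ ∑ i, binEntropy (#{a | f a i = true} / Fintype.card α) := by
  simpa only [sum_negMulLog_card_fiber_eq_binEntropy] using log_card_le_sum_negMulLog hf

lemma observable.injective_sumElim {n : ℕ} {F : (Fin n → Bool) → (Fin n → Bool)}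
    {S : Finset (Fin n)} (hobs : observable F S) :
    Function.Injective fun x : Fin n → Bool => Sum.elim (fun s : S => x s) (F x) := by
  intro x y hxy
  apply hobs
  funext t s
  cases t with
  | zero => exact congrFun hxy (Sum.inl s)
  | succ t =>
    have hF : F x = F y := funext fun i => congrFun hxy (Sum.inr i)
    simp only [Function.iterate_succ_apply, hF]

lemma isAndOrBN.binEntropy_card_filter_apply {n K : ℕ} {F : (Fin n → Bool) → (Fin n → Bool)}
    (hF : isAndOrBN K F) (i : Fin n) :
    binEntropy (#{x | F x i = true} / Fintype.card (Fin n → Bool)) =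
      binEntropy ((2 : ℝ) ^ K)⁻¹ := by
  obtain ⟨idx, hidx, b, hgate⟩ := hF i
  have hfixed (v : Fin K → Bool) :
      (#{x : Fin n → Bool | ∀ j, x (idx j) = v j} / Fintype.card (Fin n → Bool) : ℝ) =
        ((2 : ℝ) ^ K)⁻¹ := by
    have hcount := hidx.card_filter_forall_apply_eq_mul v
    simp only [Fintype.card_bool, Fintype.card_fin] at hcount
    have hne : #{x : Fin n → Bool | ∀ j, x (idx j) = v j} ≠ 0 :=
      left_ne_zero_of_mul (hcount ▸ pow_ne_zero n two_ne_zero)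
    rw [Fintype.card_fun, Fintype.card_bool, Fintype.card_fin, ← hcount, Nat.cast_mul,
      Nat.cast_pow, Nat.cast_ofNat, div_mul_cancel_left₀ (Nat.cast_ne_zero.mpr hne)]
  rcases hgate with hand | hor
  · have hiff (x : Fin n → Bool) : F x i = true ↔ ∀ j, x (idx j) = !b j := by
      simpa [hand, Bool.eq_not_iff] using Finset.inf_eq_top_iff (fun j => x (idx j) ^^ b j) univ
    rw [filter_congr fun x _ => hiff x, hfixed]
  · have hiff (x : Fin n → Bool) : F x i = true ↔ ¬ ∀ j, x (idx j) = b j := by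
      simpa [hor] using (Finset.sup_eq_bot_iff (fun j => x (idx j) ^^ b j) univ).not
    rw [filter_congr fun x _ => hiff x, card_filter_not_div, hfixed, binEntropy_one_sub]

theorem K_and_or_lower_bound_general (n K m : ℕ)
    (F : (Fin n → Bool) → (Fin n → Bool)) (hF : isAndOrBN K F)
    (S : Finset (Fin n)) (hS : S.card = m) (hobs : observable F S) :
    (m : ℝ) ≥
      ((1 - (K : ℝ)) + (((2 : ℝ) ^ K - 1) / (2 : ℝ) ^ K) * Real.logb 2 ((2 : ℝ) ^ K - 1)) * n := by
  have hbound :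
      log (Fintype.card (Fin n → Bool)) ≤ m * log 2 + n * binEntropy ((2 : ℝ) ^ K)⁻¹ := by
    refine (log_card_le_sum_binEntropy hobs.injective_sumElim).trans ?_
    rw [Fintype.sum_sum_type]
    refine add_le_add ?_ (le_of_eq ?_)
    · calc _ ≤ ∑ _s : S, log 2 := sum_le_sum fun _ _ => binEntropy_le_log_two
        _ = m * log 2 := by simp [hS]
    · exact (sum_congr rfl fun i _ => hF.binEntropy_card_filter_apply i).trans (by simp)
  rw [Fintype.card_fun, Fintype.card_bool, Fintype.card_fin, Nat.cast_pow, Nat.cast_ofNat, log_pow,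
    binEntropy_inv_two_pow] at hbound
  have hlog2 : 0 < log 2 := log_pos one_lt_two
  rw [ge_iff_le, ← mul_le_mul_iff_of_pos_right hlog2]
  calc _ = n * log 2 - n * (K * log 2 - (2 ^ K - 1) / 2 ^ K * log (2 ^ K - 1)) := by
        rw [logb]; field_simp; ring
    _ ≤ m * log 2 := by linarith

theorem K_and_or_lower_bound (n K m : ℕ) (hK : 2 < K)
    (F : (Fin n → Bool) → (Fin n → Bool)) (hF : isAndOrBN K F)
    (S : Finset (Fin n)) (hS : S.card = m) (hobs : observable F S) :
    (m : ℝ) ≥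
      ((1 - (K : ℝ)) + (((2 : ℝ) ^ K - 1) / (2 : ℝ) ^ K) * Real.logb 2 ((2 : ℝ) ^ K - 1)) * n :=
  K_and_or_lower_bound_general n K m F hF S hS hobs
end

section
/- For every K > 2 there exists a K-AND-OR-BN F on n = K + 1 nodes such that for every observation set S, if F is observable with S then S is the whole set of K + 1 nodes (i.e., in the worst case all n nodes must be observed). -/
/-!
Take the network in which every node computes the AND of all the other nodes. With `K ≥ 2`
inputs per node, a state with at most one `true` coordinate is sent to the all-`false` state.
So if a node `i` is not observed, the all-`false` state and the state that is `true` exactly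
at `i` have the same output at time `0` and the same successor, hence the same output sequence.
-/

open Function

theorem observable.eq_of_eqOn_of_apply_eq {n : ℕ} {F : (Fin n → Bool) → (Fin n → Bool)}
    {S : Finset (Fin n)} (hS : observable F S) {x y : Fin n → Bool}
    (hxy : ∀ i ∈ S, x i = y i) (hF : F x = F y) : x = y := by
  refine hS (funext fun t => funext fun i => ?_)
  cases t with
  | zero => exact hxy i i.2
  | succ t => simp only [iterate_succ_apply, hF]

noncomputable def andOfOthers (n : ℕ) (x : Fin (n + 1) → Bool) (i : Fin (n + 1)) : Bool :=
  Finset.univ.inf fun j : Fin n => x (i.succAbove j)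

theorem isAndOrBN_andOfOthers (n : ℕ) : isAndOrBN n (andOfOthers n) := fun i =>
  ⟨i.succAbove, Fin.succAbove_right_injective, fun _ => false,
    Or.inl fun x => by simp only [andOfOthers, Bool.xor_false]⟩

theorem exists_succAbove_ne {n : ℕ} (hn : 1 < n) (j i : Fin (n + 1)) :
    ∃ k : Fin n, j.succAbove k ≠ i := by
  by_contra! h
  have := Fin.succAbove_right_injective ((h ⟨0, by omega⟩).trans (h ⟨1, hn⟩).symm)
  simp at this

theorem andOfOthers_eq_false {n : ℕ} (hn : 1 < n) {x : Fin (n + 1) → Bool} {i : Fin (n + 1)}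
    (hx : ∀ j ≠ i, x j = false) : andOfOthers n x = fun _ => false := by
  funext j
  obtain ⟨k, hk⟩ := exists_succAbove_ne hn j i
  refine le_antisymm ?_ (Bool.false_le _)
  calc andOfOthers n x j ≤ x (j.succAbove k) := Finset.inf_le (Finset.mem_univ k)
    _ = false := hx _ hk

theorem worst_case_K_and_or (K : ℕ) (hK : 2 < K) :
    ∃ F : (Fin (K + 1) → Bool) → (Fin (K + 1) → Bool),
      isAndOrBN K F ∧
      (∀ S : Finset (Fin (K + 1)), observable F S → S = Finset.univ) := by
  refine ⟨andOfOthers K, isAndOrBN_andOfOthers K, fun S hS => ?_⟩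
  refine Finset.eq_univ_of_forall fun i => ?_
  by_contra hi
  have hK1 : 1 < K := by omega
  let e : Fin (K + 1) → Bool := update (fun _ => false) i true
  have he : ∀ j ≠ i, e j = false := fun j hj => update_of_ne hj _ _
  have hagree : ∀ j ∈ S, (fun _ => false) j = e j := fun j hj =>
    (he j (ne_of_mem_of_not_mem hj hi)).symm
  have hsucc : andOfOthers K (fun _ => false) = andOfOthers K e :=
    (andOfOthers_eq_false hK1 (i := i) fun _ _ => rfl).trans (andOfOthers_eq_false hK1 he).symm
  have := congrFun (hS.eq_of_eqOn_of_apply_eq hagree hsucc) i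
  simp [e] at this
end

section
/- For every K > 2 and every n ≥ 2^K − 1 with (2^K − 1) ∣ n, there exists a K-AND-OR-BN on n nodes that is observable with an observation set of size ((2^K − K − 1) * n) / (2^K − 1). -/
/-!
Split the nodes into blocks of `2 ^ K - 1`: `K` hidden nodes carrying a state `v : Fin K → Bool`
and one observed node for every heavy `a`, i.e. of Hamming weight at least two. The observed
node `a` is the AND of literals that is true exactly when `v = a`, and the hidden node `j` is the
OR of literals that is true exactly when `v ≠ e_j`. So the observations at time `1` reveal `v`
whenever it is heavy. Otherwise `v` is `0` or some `e_l`; its successor `(v ≠ e_j)_j` then has at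
most one zero, hence is heavy as `K ≥ 3`, and it still determines `v`, which is therefore
revealed at time `2`.
-/

open Finset Function

section Networks

variable {V W ι : Type*}

def IsAndOrOfLiterals (K : ℕ) (f : (V → Bool) → Bool) : Prop :=
  ∃ idx : Fin K → V, Injective idx ∧ ∃ b : Fin K → Bool,
    (∀ x, f x = univ.inf fun j => Bool.xor (x (idx j)) (b j)) ∨
    (∀ x, f x = univ.sup fun j => Bool.xor (x (idx j)) (b j))

def IsAndOrNet (K : ℕ) (F : (V → Bool) → V → Bool) : Prop :=
  ∀ v, IsAndOrOfLiterals K (F · v)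

theorem IsAndOrOfLiterals.comp_injective {K : ℕ} {f : (W → Bool) → Bool}
    (hf : IsAndOrOfLiterals K f) {g : W → V} (hg : Injective g) :
    IsAndOrOfLiterals K fun x : V → Bool => f (x ∘ g) := by
  obtain ⟨idx, hidx, b, h | h⟩ := hf
  · exact ⟨g ∘ idx, hg.comp hidx, b, Or.inl fun x => h (x ∘ g)⟩
  · exact ⟨g ∘ idx, hg.comp hidx, b, Or.inr fun x => h (x ∘ g)⟩

theorem isAndOrBN_iff_isAndOrNet {n K : ℕ} {F : (Fin n → Bool) → Fin n → Bool} :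
    isAndOrBN K F ↔ IsAndOrNet K F :=
  Iff.rfl

def IsObservable (F : (V → Bool) → V → Bool) (T : Set V) : Prop :=
  ∀ x y, (∀ t, ∀ v ∈ T, F^[t] x v = F^[t] y v) → x = y

theorem observable_of_isObservable {n : ℕ} {F : (Fin n → Bool) → Fin n → Bool}
    {S : Finset (Fin n)} (h : IsObservable F S) : observable F S :=
  fun x y hxy => h x y fun t v hv => congrFun (congrFun hxy t) ⟨v, hv⟩

def relabel (e : V ≃ W) (F : (W → Bool) → W → Bool) : (V → Bool) → V → Bool :=
  fun x v => F (x ∘ e.symm) (e v)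

theorem relabel_iterate (e : V ≃ W) (F : (W → Bool) → W → Bool) (t : ℕ) :
    (relabel e F)^[t] = relabel e F^[t] := by
  induction t with
  | zero => funext x v; simp [relabel]
  | succ t ih => funext x v; simp [ih, relabel, comp_def]

theorem IsAndOrNet.relabel {K : ℕ} {F : (W → Bool) → W → Bool} (h : IsAndOrNet K F)
    (e : V ≃ W) : IsAndOrNet K (relabel e F) :=
  fun v => (h (e v)).comp_injective e.symm.injective

theorem IsObservable.relabel {F : (W → Bool) → W → Bool} {T : Set W} (h : IsObservable F T)
    (e : V ≃ W) : IsObservable (relabel e F) (e ⁻¹' T) := by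
  intro x y hxy
  have := h (x ∘ e.symm) (y ∘ e.symm) fun t w hw => by
    simpa [relabel_iterate, _root_.relabel] using hxy t (e.symm w) (by simpa using hw)
  funext v
  simpa using congrFun this (e v)

def blockwise (F : (W → Bool) → W → Bool) : (ι × W → Bool) → ι × W → Bool :=
  fun x p => F (fun w => x (p.1, w)) p.2

theorem blockwise_iterate (F : (W → Bool) → W → Bool) (t : ℕ) :
    (blockwise F : (ι × W → Bool) → ι × W → Bool)^[t] = blockwise F^[t] := by
  induction t with
  | zero => funext x p; simp [blockwise]
  | succ t ih => funext x p; simp [ih, blockwise]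

theorem IsAndOrNet.blockwise {K : ℕ} {F : (W → Bool) → W → Bool} (h : IsAndOrNet K F) :
    IsAndOrNet K (blockwise F : (ι × W → Bool) → ι × W → Bool) :=
  fun p => (h p.2).comp_injective (Prod.mk_right_injective p.1)

theorem IsObservable.blockwise {F : (W → Bool) → W → Bool} {T : Set W}
    (h : IsObservable F T) :
    IsObservable (blockwise F : (ι × W → Bool) → ι × W → Bool) (Set.univ ×ˢ T) := by
  intro x y hxy
  funext ⟨i, w⟩
  have := h (fun w => x (i, w)) (fun w => y (i, w)) fun t w hw => by
    simpa [blockwise_iterate, _root_.blockwise] using hxy t (i, w) ⟨trivial, hw⟩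
  exact congrFun this w

end Networks

section Literals

variable {ι : Type*} [Fintype ι]

theorem univ_sup_xor (v b : ι → Bool) :
    (univ.sup fun k => Bool.xor (v k) (b k)) = !decide (v = b) := by
  rw [Bool.eq_iff_iff, ← top_eq_true, Finset.sup_eq_top_iff]
  simp [funext_iff]

theorem univ_inf_xor_not (v a : ι → Bool) :
    (univ.inf fun k => Bool.xor (v k) (!a k)) = decide (v = a) := by
  rw [Bool.eq_iff_iff, ← top_eq_true, Finset.inf_eq_top_iff]
  simp [funext_iff]

end Literals

section Block

variable {K : ℕ}

def unitVec (j : Fin K) : Fin K → Bool := fun k => decide (k = j)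

theorem unitVec_injective : Injective (unitVec (K := K)) := fun j l h => by
  simpa [unitVec] using congrFun h j

theorem const_false_ne_unitVec (j : Fin K) : (fun _ => false) ≠ unitVec j := fun h => by
  simpa [unitVec] using congrFun h j

def lightVecs (K : ℕ) : Finset (Fin K → Bool) := insert (fun _ => false) (univ.image unitVec)

def heavyVecs (K : ℕ) : Finset (Fin K → Bool) := (lightVecs K)ᶜ

theorem card_heavyVecs : #(heavyVecs K) = 2 ^ K - K - 1 := by
  have : #(lightVecs K) = K + 1 := by
    rw [lightVecs, card_insert_of_notMem, card_image_of_injective _ unitVec_injective, card_univ,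
      Fintype.card_fin]
    simpa using fun j => (const_false_ne_unitVec j).symm
  rw [heavyVecs, card_compl, this, Fintype.card_fun, Fintype.card_bool, Fintype.card_fin,
    Nat.sub_sub]

theorem exists_forall_ne_eq_false (hK : 0 < K) {u : Fin K → Bool} (hu : u ∈ lightVecs K) :
    ∃ j, ∀ k ≠ j, u k = false := by
  simp only [lightVecs, mem_insert, mem_image, mem_univ, true_and] at hu
  rcases hu with rfl | ⟨j, rfl⟩
  · exact ⟨⟨0, hK⟩, fun _ _ => rfl⟩
  · exact ⟨j, fun k hk => by simp [unitVec, hk]⟩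

def hiddenStep (v : Fin K → Bool) : Fin K → Bool := fun j => !decide (v = unitVec j)

theorem hiddenStep_mem_heavyVecs (hK : 2 < K) (v : Fin K → Bool) :
    hiddenStep v ∈ heavyVecs K := by
  rw [heavyVecs, mem_compl]
  intro hlight
  obtain ⟨j, hj⟩ := exists_forall_ne_eq_false (by omega) hlight
  obtain ⟨k, hk, k', hk', hkk'⟩ := (one_lt_card (s := univ.erase j)).mp (by
    rw [card_erase_of_mem (mem_univ j), card_univ, Fintype.card_fin]; omega)
  have hunit : ∀ k ≠ j, v = unitVec k := fun k hk => by simpa [hiddenStep] using hj k hk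
  exact hkk' (unitVec_injective ((hunit k (ne_of_mem_erase hk)).symm.trans
    (hunit k' (ne_of_mem_erase hk'))))

theorem hiddenStep_injOn : Set.InjOn hiddenStep (lightVecs K : Set (Fin K → Bool)) := by
  intro u hu u' hu' h
  have key : ∀ j, u = unitVec j ↔ u' = unitVec j := fun j => by
    simpa [hiddenStep] using congrFun h j
  simp only [lightVecs, coe_insert, coe_image, coe_univ, Set.image_univ, Set.mem_insert_iff,
    Set.mem_range] at hu hu'
  rcases hu with rfl | ⟨j, rfl⟩
  · rcases hu' with rfl | ⟨j', rfl⟩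
    · rfl
    · exact absurd ((key j').2 rfl) (const_false_ne_unitVec j')
  · exact ((key j).1 rfl).symm

abbrev Block (K : ℕ) := Fin K ⊕ {a // a ∈ heavyVecs K}

theorem card_block (hK : 2 < K) : Fintype.card (Block K) = 2 ^ K - 1 := by
  have : K < 2 ^ K := Nat.lt_two_pow_self
  rw [Fintype.card_sum, Fintype.card_fin, Fintype.card_coe, card_heavyVecs]
  omega

def hiddenState (x : Block K → Bool) : Fin K → Bool := x ∘ Sum.inl

def blockStep : (Block K → Bool) → Block K → Bool
  | x, .inl j => hiddenStep (hiddenState x) j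
  | x, .inr a => decide (hiddenState x = a)

theorem semiconj_hiddenState_blockStep :
    Semiconj hiddenState (blockStep (K := K)) hiddenStep :=
  fun _ => rfl

theorem isAndOrNet_blockStep : IsAndOrNet K (blockStep (K := K)) := by
  rintro (j | a)
  · exact ⟨Sum.inl, Sum.inl_injective, unitVec j,
      Or.inr fun x => (univ_sup_xor (hiddenState x) _).symm⟩
  · exact ⟨Sum.inl, Sum.inl_injective, fun k => !a.1 k,
      Or.inl fun x => (univ_inf_xor_not (hiddenState x) a.1).symm⟩

theorem blockStep_iterate_succ_inr (x : Block K → Bool) (t : ℕ) (a : {a // a ∈ heavyVecs K}) :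
    blockStep^[t + 1] x (.inr a) = decide (hiddenStep^[t] (hiddenState x) = a) := by
  rw [iterate_succ_apply', ← (semiconj_hiddenState_blockStep.iterate_right t).eq]
  rfl

theorem isObservable_blockStep (hK : 2 < K) :
    IsObservable (blockStep (K := K)) (Set.range Sum.inr) := by
  intro x y hxy
  have sep : ∀ t, hiddenStep^[t] (hiddenState x) ∈ heavyVecs K ∨
      hiddenStep^[t] (hiddenState y) ∈ heavyVecs K →
      hiddenStep^[t] (hiddenState x) = hiddenStep^[t] (hiddenState y) := by
    intro t h
    have obs (a : {a // a ∈ heavyVecs K}) := hxy (t + 1) (.inr a) ⟨a, rfl⟩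
    simp only [blockStep_iterate_succ_inr, decide_eq_decide] at obs
    rcases h with h | h
    · exact ((obs ⟨_, h⟩).1 rfl).symm
    · exact (obs ⟨_, h⟩).2 rfl
  have hidden_eq : hiddenState x = hiddenState y := by
    by_cases h : hiddenState x ∈ heavyVecs K ∨ hiddenState y ∈ heavyVecs K
    · exact sep 0 h
    · simp only [heavyVecs, mem_compl, not_or, not_not] at h
      exact hiddenStep_injOn h.1 h.2 (sep 1 (.inl (hiddenStep_mem_heavyVecs hK _)))
  ext (j | a)
  · exact congrFun hidden_eq j
  · exact hxy 0 (.inr a) ⟨a, rfl⟩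

end Block

theorem best_case_K_and_or_general (K n : ℕ) (hK : 2 < K)
    (hdvd : (2 ^ K - 1) ∣ n) :
    ∃ (F : (Fin n → Bool) → (Fin n → Bool)) (S : Finset (Fin n)),
      isAndOrBN K F ∧ S.card = ((2 ^ K - K - 1) * n) / (2 ^ K - 1) ∧ observable F S := by
  obtain ⟨c, rfl⟩ := hdvd
  let e : Fin ((2 ^ K - 1) * c) ≃ Fin c × Block K :=
    (Fintype.equivFinOfCardEq (by rw [Fintype.card_prod, Fintype.card_fin, card_block hK,
      mul_comm])).symm
  refine ⟨relabel e (blockwise blockStep), (univ ×ˢ univ.map .inr).map e.symm.toEmbedding,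
    isAndOrBN_iff_isAndOrNet.mpr (isAndOrNet_blockStep.blockwise.relabel e), ?_,
    observable_of_isObservable ?_⟩
  · have : 0 < 2 ^ K - 1 := by have : K < 2 ^ K := Nat.lt_two_pow_self; omega
    rw [card_map, card_product, card_univ, Fintype.card_fin, card_map, card_univ, Fintype.card_coe,
      card_heavyVecs, mul_left_comm, Nat.mul_div_cancel_left _ this, mul_comm]
  · convert ((isObservable_blockStep hK).blockwise (ι := Fin c)).relabel e using 1
    simp [Equiv.image_eq_preimage_symm]

theorem best_case_K_and_or (K n : ℕ) (hK : 2 < K) (hn : 2 ^ K - 1 ≤ n)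
    (hdvd : (2 ^ K - 1) ∣ n) :
    ∃ (F : (Fin n → Bool) → (Fin n → Bool)) (S : Finset (Fin n)),
      isAndOrBN K F ∧ S.card = ((2 ^ K - K - 1) * n) / (2 ^ K - 1) ∧ observable F S :=
  best_case_K_and_or_general K n hK hdvd
end

section
/- For every integer K ≥ 2, the following strict inequality of real numbers holds: (2^K − K − 1)/(2^K − 1) > (1 − K) + ((2^K − 1)/2^K) * Real.logb 2 (2^K − 1). (Hence the best-case upper-bound coefficient for K-AND-OR-BNs strictly exceeds the entropy lower-bound coefficient, independently of n.) -/
/-!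
Write `N = 2^K`, so that `logb 2 N = K`. Since `log (1 - 1/N) ≤ -1/N`, we get
`logb 2 (N - 1) ≤ K - 1 / (N log 2)`, and after substituting this bound the difference of the
two sides is `((N - 1)^2 - K N log 2) / (N^2 (N - 1) log 2)`. Its numerator is positive because
`log 2 < 1` and `K ≤ N - 2`.
-/

open Real

lemma Nat.add_two_le_two_pow {K : ℕ} (hK : 2 ≤ K) : K + 2 ≤ 2 ^ K := by
  induction K, hK using Nat.le_induction with
  | base => norm_num
  | succ n _ ih => rw [pow_succ]; omega

lemma Real.logb_sub_one_le {b x : ℝ} (hb : 1 < b) (hx : 1 < x) :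
    logb b (x - 1) ≤ logb b x - 1 / (x * log b) := by
  have hlogb : 0 < log b := log_pos hb
  have hlog : log (x - 1) - log x ≤ -(1 / x) := by
    rw [← log_div (by linarith) (by linarith)]
    calc log ((x - 1) / x) ≤ (x - 1) / x - 1 := log_le_sub_one_of_pos (by positivity)
      _ = -(1 / x) := by field_simp; ring
  have hrhs : logb b x - 1 / (x * log b) = (log x - 1 / x) / log b := by
    rw [logb]; field_simp
  rw [hrhs, logb]
  gcongr
  linarith

lemma mul_mul_lt_sub_one_sq {K N c : ℝ} (hK : 0 ≤ K) (hKN : K ≤ N - 2) (hc : c < 1) :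
    K * N * c < (N - 1) ^ 2 := by
  nlinarith [mul_le_mul_of_nonneg_left hc.le (mul_nonneg hK (by linarith : (0 : ℝ) ≤ N))]

lemma sub_one_add_mul_lt_div {K N c : ℝ} (hN : 1 < N) (hc : 0 < c)
    (h : K * N * c < (N - 1) ^ 2) :
    (1 - K) + (N - 1) / N * (K - 1 / (N * c)) < (N - K - 1) / (N - 1) := by
  have hN0 : 0 < N := by linarith
  have hN1 : 0 < N - 1 := by linarith
  have hdiff : (N - K - 1) / (N - 1) - ((1 - K) + (N - 1) / N * (K - 1 / (N * c)))
      = ((N - 1) ^ 2 - K * N * c) / (N ^ 2 * (N - 1) * c) := by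
    field_simp
    ring
  have : 0 < ((N - 1) ^ 2 - K * N * c) / (N ^ 2 * (N - 1) * c) :=
    div_pos (by linarith) (by positivity)
  linarith

theorem upper_coeff_gt_lower_coeff (K : ℕ) (hK : 2 ≤ K) :
    ((2 : ℝ) ^ K - (K : ℝ) - 1) / ((2 : ℝ) ^ K - 1) >
      (1 - (K : ℝ)) + (((2 : ℝ) ^ K - 1) / (2 : ℝ) ^ K) * Real.logb 2 ((2 : ℝ) ^ K - 1) := by
  have hKN : (K : ℝ) + 2 ≤ 2 ^ K := by exact_mod_cast Nat.add_two_le_two_pow hK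
  have hlogb : logb 2 ((2 : ℝ) ^ K - 1) ≤ K - 1 / (2 ^ K * log 2) := by
    have := logb_sub_one_le one_lt_two (by linarith : (1 : ℝ) < 2 ^ K)
    rwa [logb_pow, logb_self_eq_one one_lt_two, mul_one] at this
  have hlog2 : log 2 < 1 := by linarith [log_two_lt_d9]
  calc (1 - (K : ℝ)) + ((2 : ℝ) ^ K - 1) / 2 ^ K * logb 2 ((2 : ℝ) ^ K - 1)
      ≤ (1 - K) + ((2 : ℝ) ^ K - 1) / 2 ^ K * (K - 1 / (2 ^ K * log 2)) := by
        gcongr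
        exact div_nonneg (by linarith) (by positivity)
    _ < ((2 : ℝ) ^ K - K - 1) / (2 ^ K - 1) :=
        sub_one_add_mul_lt_div (by linarith) (log_pos one_lt_two)
          (mul_mul_lt_sub_one_sq K.cast_nonneg (by linarith) hlog2)
end
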